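/- arXiv:1602.04799 — 2 statements merged into one kernel-verified Lean document; each statement's English description precedes it below -/
import Mathlib

section
/- Novikoff's theorem: let φ₁,…,φ_N ∈ ℝ^D be unit vectors with labels y₁,…,y_N ∈ {−1, +1}, and suppose there exists a unit vector u and γ > 0 with y_i·⟨u, φ_i⟩ ≥ γ for all i. Then any sequence of perceptron updates w ← w + y·φ (starting from w = 0, each update performed only on a misclassified example, i.e., y·⟨w, φ⟩ ≤ 0) has length at most 1/γ². -/
open scoped RealInnerProductSpace

/-! The inner product with `u` grows by at least `γ` per update, while `‖w‖²` grows by at most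
`R²` since each update is made on a misclassified example. Cauchy–Schwarz then gives
`(T γ)² ≤ ⟪u, w_T⟫² ≤ ‖u‖² T R²`. -/

section Perceptron

variable {E : Type*} [NormedAddCommGroup E] [InnerProductSpace ℝ E] {w z : ℕ → E} {T : ℕ}

theorem perceptron_mul_le_inner {u : E} {γ : ℝ} (hw0 : w 0 = 0)
    (hupd : ∀ t < T, w (t + 1) = w t + z t) (hmargin : ∀ t < T, γ ≤ ⟪u, z t⟫) :
    ∀ t ≤ T, t * γ ≤ ⟪u, w t⟫ := by
  intro t ht
  induction t with
  | zero => simp [hw0]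
  | succ t ih =>
    rw [hupd t ht, inner_add_right]
    push_cast
    linarith [ih (Nat.le_of_succ_le ht), hmargin t ht]

theorem perceptron_norm_sq_le {R : ℝ} (hw0 : w 0 = 0)
    (hupd : ∀ t < T, w (t + 1) = w t + z t) (hmis : ∀ t < T, ⟪w t, z t⟫ ≤ 0)
    (hz : ∀ t < T, ‖z t‖ ≤ R) :
    ∀ t ≤ T, ‖w t‖ ^ 2 ≤ t * R ^ 2 := by
  intro t ht
  induction t with
  | zero => simp [hw0]
  | succ t ih =>
    have hzR : ‖z t‖ ^ 2 ≤ R ^ 2 := pow_le_pow_left₀ (norm_nonneg _) (hz t ht) 2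
    rw [hupd t ht, norm_add_sq_real]
    push_cast
    linarith [ih (Nat.le_of_succ_le ht), hmis t ht]

theorem perceptron_mistakes_mul_sq_le {u : E} {γ R : ℝ} (hγ : 0 ≤ γ) (hw0 : w 0 = 0)
    (hupd : ∀ t < T, w (t + 1) = w t + z t) (hmis : ∀ t < T, ⟪w t, z t⟫ ≤ 0)
    (hmargin : ∀ t < T, γ ≤ ⟪u, z t⟫) (hz : ∀ t < T, ‖z t‖ ≤ R) :
    T * γ ^ 2 ≤ ‖u‖ ^ 2 * R ^ 2 := by
  rcases Nat.eq_zero_or_pos T with rfl | hT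
  · simp only [Nat.cast_zero, zero_mul]; positivity
  have hinner : T * γ ≤ ‖u‖ * ‖w T‖ :=
    (perceptron_mul_le_inner hw0 hupd hmargin T le_rfl).trans (real_inner_le_norm _ _)
  have hsq : (T * γ) ^ 2 ≤ ‖u‖ ^ 2 * (T * R ^ 2) :=
    calc (T * γ) ^ 2 ≤ (‖u‖ * ‖w T‖) ^ 2 := pow_le_pow_left₀ (by positivity) hinner 2
      _ = ‖u‖ ^ 2 * ‖w T‖ ^ 2 := mul_pow _ _ _
      _ ≤ ‖u‖ ^ 2 * (T * R ^ 2) := by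
        gcongr
        exact perceptron_norm_sq_le hw0 hupd hmis hz T le_rfl
  have hTpos : (0 : ℝ) < T := Nat.cast_pos.mpr hT
  refine le_of_mul_le_mul_left ?_ hTpos
  linarith

end Perceptron

theorem novikoff_mistake_bound (D N T : ℕ)
    (φ : Fin N → EuclideanSpace ℝ (Fin D)) (y : Fin N → ℝ)
    (u : EuclideanSpace ℝ (Fin D)) (γ : ℝ) (hγ : 0 < γ)
    (hφ : ∀ i, ‖φ i‖ = 1) (hy : ∀ i, y i = 1 ∨ y i = -1) (hu : ‖u‖ = 1)
    (hmargin : ∀ i, y i * (inner ℝ (u) (φ i) : ℝ) ≥ γ)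
    (w : ℕ → EuclideanSpace ℝ (Fin D)) (idx : ℕ → Fin N)
    (hw0 : w 0 = 0)
    (hmis : ∀ t < T, y (idx t) * (inner ℝ (w t) (φ (idx t)) : ℝ) ≤ 0)
    (hupd : ∀ t < T, w (t + 1) = w t + y (idx t) • φ (idx t)) :
    (T : ℝ) ≤ 1 / γ ^ 2 := by
  have hnorm : ∀ i, ‖y i • φ i‖ ≤ 1 := fun i => by
    rcases hy i with h | h <;> simp [h, hφ i]
  have hbound := perceptron_mistakes_mul_sq_le hγ.le hw0 hupd
    (fun t ht => by simpa only [inner_smul_right] using hmis t ht)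
    (fun t _ => by simpa only [inner_smul_right] using hmargin (idx t))
    (fun t _ => hnorm (idx t))
  rw [hu] at hbound
  rw [le_div_iff₀ (by positivity)]
  linarith
end

section
/- In Novikoff's setting, after t perceptron updates starting from w₀ = 0, the weight vector w_t satisfies ⟨u, w_t⟩ ≥ t·γ and ‖w_t‖² ≤ t, hence t·γ ≤ ⟨u, w_t⟩ ≤ ‖w_t‖ ≤ √t and therefore t ≤ 1/γ². -/
open scoped RealInnerProductSpace

/-! Every mistake raises `⟪u, w⟫` by at least the margin `γ`, while it raises `‖w‖²` by at most
`1`, because the added unit vector `y • φ` makes a non-acute angle with `w`. After `T` mistakes,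
Cauchy–Schwarz squeezes `T γ ≤ ⟪u, w_T⟫ ≤ ‖w_T‖ ≤ √T`. -/

theorem add_mul_le_of_forall_add_le_succ {a : ℕ → ℝ} {c : ℝ} {T : ℕ}
    (h : ∀ t < T, a t + c ≤ a (t + 1)) : a 0 + T * c ≤ a T := by
  induction T with
  | zero => simp
  | succ T ih =>
    have hprev := ih fun t ht => h t (Nat.lt_succ_of_lt ht)
    have hlast := h T (Nat.lt_succ_self T)
    push_cast
    linarith

theorem le_add_mul_of_forall_le_add_succ {a : ℕ → ℝ} {c : ℝ} {T : ℕ}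
    (h : ∀ t < T, a (t + 1) ≤ a t + c) : a T ≤ a 0 + T * c := by
  have := add_mul_le_of_forall_add_le_succ (a := fun t => -a t) (c := -c) fun t ht => by
    linarith [h t ht]
  linarith

theorem le_one_div_sq_of_mul_le_sqrt {T γ : ℝ} (hT : 0 ≤ T) (hγ : 0 < γ)
    (h : T * γ ≤ √T) : T ≤ 1 / γ ^ 2 := by
  have hsq : (T * γ) ^ 2 ≤ T := (Real.le_sqrt (by positivity) hT).1 h
  rw [le_div_iff₀ (by positivity)]
  rcases hT.eq_or_lt with rfl | hTpos
  · simp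
  · nlinarith

section Perceptron

variable {F : Type*} [NormedAddCommGroup F] [InnerProductSpace ℝ F]

theorem norm_add_sq_le_of_inner_nonpos {v w : F} (h : ⟪w, v⟫ ≤ 0) :
    ‖w + v‖ ^ 2 ≤ ‖w‖ ^ 2 + ‖v‖ ^ 2 := by
  rw [norm_add_sq_real]
  linarith

theorem inner_add_le_inner_add_smul {u w x : F} {y γ : ℝ} (hmargin : γ ≤ y * ⟪u, x⟫) :
    ⟪u, w⟫ + γ ≤ ⟪u, w + y • x⟫ := by
  rw [inner_add_right, real_inner_smul_right]
  linarith

theorem norm_add_smul_sq_le_of_mistake {w x : F} {y : ℝ} (hy : y = 1 ∨ y = -1)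
    (hx : ‖x‖ = 1) (hmis : y * ⟪w, x⟫ ≤ 0) : ‖w + y • x‖ ^ 2 ≤ ‖w‖ ^ 2 + 1 := by
  have hyx : ‖y • x‖ = 1 := by
    rcases hy with rfl | rfl <;> simp [hx]
  simpa [hyx] using
    norm_add_sq_le_of_inner_nonpos (v := y • x) (w := w) (by rwa [real_inner_smul_right])

end Perceptron

theorem novikoff_invariants (D N T : ℕ)
    (φ : Fin N → EuclideanSpace ℝ (Fin D)) (y : Fin N → ℝ)
    (u : EuclideanSpace ℝ (Fin D)) (γ : ℝ) (hγ : 0 < γ)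
    (hφ : ∀ i, ‖φ i‖ = 1) (hy : ∀ i, y i = 1 ∨ y i = -1) (hu : ‖u‖ = 1)
    (hmargin : ∀ i, y i * (inner ℝ (u) (φ i) : ℝ) ≥ γ)
    (w : ℕ → EuclideanSpace ℝ (Fin D)) (idx : ℕ → Fin N)
    (hw0 : w 0 = 0)
    (hmis : ∀ t < T, y (idx t) * (inner ℝ (w t) (φ (idx t)) : ℝ) ≤ 0)
    (hupd : ∀ t < T, w (t + 1) = w t + y (idx t) • φ (idx t)) :
    (T : ℝ) * γ ≤ (inner ℝ (u) (w T) : ℝ) ∧ ‖w T‖ ^ 2 ≤ (T : ℝ) ∧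
      (inner ℝ (u) (w T) : ℝ) ≤ ‖w T‖ ∧ ‖w T‖ ≤ Real.sqrt T ∧ (T : ℝ) ≤ 1 / γ ^ 2 := by
  have hinner : (T : ℝ) * γ ≤ ⟪u, w T⟫ := by
    simpa [hw0] using add_mul_le_of_forall_add_le_succ (a := fun t => ⟪u, w t⟫) fun t ht => by
      rw [hupd t ht]
      exact inner_add_le_inner_add_smul (hmargin (idx t))
  have hnorm : ‖w T‖ ^ 2 ≤ T := by
    have := le_add_mul_of_forall_le_add_succ (a := fun t => ‖w t‖ ^ 2) (c := 1) fun t ht => by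
      rw [hupd t ht]
      exact norm_add_smul_sq_le_of_mistake (hy _) (hφ _) (hmis t ht)
    simpa [hw0] using this
  have hcs : ⟪u, w T⟫ ≤ ‖w T‖ := by
    simpa [hu] using real_inner_le_norm u (w T)
  have hsqrt : ‖w T‖ ≤ √T := (Real.le_sqrt (norm_nonneg _) T.cast_nonneg).2 hnorm
  exact ⟨hinner, hnorm, hcs, hsqrt,
    le_one_div_sq_of_mul_le_sqrt T.cast_nonneg hγ (hinner.trans (hcs.trans hsqrt))⟩
end
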